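/- Let n be a positive odd integer and let a_0, a_1, ..., a_{n-1} be elements of a commutative ring (polynomials in q) such that a_k ≡ -a_{(n-1)/2-k} (mod Φ_n(q)) for 0 ≤ k ≤ (n-1)/2 and a_k ≡ -a_{(3n-1)/2-k} (mod Φ_n(q)) for (n+1)/2 ≤ k ≤ n-1. Then the double sum ∑_{i+j ≤ n-1} a_i a_j ≡ 0 (mod Φ_n(q)). -/

import Mathlib

/-!
Write `n = 2m + 1` and work in `ℚ[q] ⧸ (Φ_n)`, where `2` is invertible. The hypotheses say that
both blocks `a₀, …, a_m` and `a_{m+1}, …, a_{2m}` are antipalindromic. Summing over `j` first, the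
row of `i` in the first block equals `aᵢ` times a prefix sum of the second block, and the row of
`i` in the second block equals `aᵢ` times a prefix sum of the first block. Prefix sums of an
antipalindromic sequence are palindromic, so each half of the double sum has the shape
`∑ xₖ yₖ` with `x` antipalindromic and `y` palindromic, which equals its own negative.
-/

open Finset

section Antipalindromic

variable {R : Type*} [CommRing R] [IsAddTorsionFree R] {L : ℕ} {x y : ℕ → R}

theorem sum_range_mul_eq_zero_of_antipalindromic
    (hx : ∀ k < L, x k + x (L - 1 - k) = 0) (hy : ∀ k < L, y (L - 1 - k) = y k) :
    ∑ k ∈ range L, x k * y k = 0 := by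
  rw [← two_nsmul_eq_zero, two_nsmul]
  nth_rewrite 2 [← sum_range_reflect]
  rw [← sum_add_distrib]
  refine sum_eq_zero fun k hk => ?_
  have hk : k < L := mem_range.mp hk
  rw [hy k hk, ← add_mul, hx k hk, zero_mul]

theorem sum_range_eq_zero_of_antipalindromic (hx : ∀ k < L, x k + x (L - 1 - k) = 0) :
    ∑ k ∈ range L, x k = 0 := by
  simpa using sum_range_mul_eq_zero_of_antipalindromic (y := 1) hx fun _ _ => rfl

theorem sum_range_sub_eq_of_antipalindromic (hx : ∀ k < L, x k + x (L - 1 - k) = 0)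
    {t : ℕ} (ht : t ≤ L) :
    ∑ k ∈ range (L - t), x k = ∑ k ∈ range t, x k := by
  have htail : ∑ k ∈ range t, x (L - t + k) = -∑ k ∈ range t, x k := by
    rw [← sum_range_reflect, ← sum_neg_distrib]
    refine sum_congr rfl fun k hk => ?_
    have hk : k < t := mem_range.mp hk
    rw [show L - t + (t - 1 - k) = L - 1 - k by omega]
    exact eq_neg_of_add_eq_zero_right (hx k (by omega))
  have hsplit := sum_range_add x (L - t) t
  rw [Nat.sub_add_cancel ht, sum_range_eq_zero_of_antipalindromic hx, htail] at hsplit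
  linear_combination -hsplit

end Antipalindromic

theorem sum_range_sum_range_sub_mul_eq_zero_of_antipalindromic_blocks {R : Type*} [CommRing R]
    [IsAddTorsionFree R] (m : ℕ) (b : ℕ → R)
    (hb₁ : ∀ k ≤ m, b k + b (m - k) = 0)
    (hb₂ : ∀ s < m, b (m + 1 + s) + b (2 * m - s) = 0) :
    ∑ i ∈ range (2 * m + 1), ∑ j ∈ range (2 * m + 1 - i), b i * b j = 0 := by
  set c : ℕ → R := fun s => b (m + 1 + s)
  have hb : ∀ k < m + 1, b k + b (m + 1 - 1 - k) = 0 := fun k hk => hb₁ k (by omega)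
  have hc : ∀ s < m, c s + c (m - 1 - s) = 0 := fun s hs => by
    simpa only [c, show m + 1 + (m - 1 - s) = 2 * m - s by omega] using hb₂ s hs
  have hrow₁ : ∀ i ≤ m, ∑ j ∈ range (2 * m + 1 - i), b j = ∑ s ∈ range (m - i), c s := by
    intro i hi
    rw [show 2 * m + 1 - i = m + 1 + (m - i) by omega, sum_range_add,
      sum_range_eq_zero_of_antipalindromic hb, zero_add]
  have hrow₂ : ∀ s, ∑ j ∈ range (2 * m + 1 - (m + 1 + s)), b j
      = ∑ j ∈ range (m + 1 - (s + 1)), b j := fun s => by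
    congr 2; omega
  have hfirst : ∑ i ∈ range (m + 1), b i * ∑ j ∈ range (2 * m + 1 - i), b j = 0 := by
    refine sum_range_mul_eq_zero_of_antipalindromic hb fun i hi => ?_
    rw [hrow₁ _ (by omega), hrow₁ _ (by omega), show m - (m + 1 - 1 - i) = i by omega,
      sum_range_sub_eq_of_antipalindromic hc (by omega)]
  have hsecond : ∑ s ∈ range m, c s * ∑ j ∈ range (2 * m + 1 - (m + 1 + s)), b j = 0 := by
    refine sum_range_mul_eq_zero_of_antipalindromic hc fun s hs => ?_
    rw [hrow₂, hrow₂, show m - 1 - s + 1 = m - s by omega,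
      sum_range_sub_eq_of_antipalindromic hb (by omega)]
    congr 2; omega
  have hsplit := sum_range_add (fun i => b i * ∑ j ∈ range (2 * m + 1 - i), b j) (m + 1) m
  rw [show m + 1 + m = 2 * m + 1 by omega] at hsplit
  simp only [← mul_sum]
  rw [hsplit, hfirst, hsecond, add_zero]

theorem stmt_0_general (n : ℕ) (hodd : Odd n) (a : ℕ → Polynomial ℚ)
    (h1 : ∀ k, k ≤ (n - 1) / 2 →
      Polynomial.cyclotomic n ℚ ∣ (a k + a ((n - 1) / 2 - k)))
    (h2 : ∀ k, (n + 1) / 2 ≤ k → k ≤ n - 1 →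
      Polynomial.cyclotomic n ℚ ∣ (a k + a ((3 * n - 1) / 2 - k))) :
    Polynomial.cyclotomic n ℚ ∣ ∑ i ∈ range n, ∑ j ∈ range (n - i), a i * a j := by
  obtain ⟨m, rfl⟩ := hodd
  let φ := Ideal.Quotient.mk (Ideal.span {Polynomial.cyclotomic (2 * m + 1) ℚ})
  have : IsAddTorsionFree (Polynomial ℚ ⧸ Ideal.span {Polynomial.cyclotomic (2 * m + 1) ℚ}) :=
    .of_module_rat _
  have hφ : ∀ {p}, Polynomial.cyclotomic (2 * m + 1) ℚ ∣ p → φ p = 0 :=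
    (Ideal.Quotient.eq_zero_iff_dvd _ _).mpr
  rw [← Ideal.Quotient.eq_zero_iff_dvd]
  simp only [map_sum, map_mul]
  refine sum_range_sum_range_sub_mul_eq_zero_of_antipalindromic_blocks m (fun k => φ (a k))
    (fun k hk => ?_) fun s hs => ?_
  · have h := h1 k (by omega)
    rw [show (2 * m + 1 - 1) / 2 = m by omega] at h
    rw [← map_add, hφ h]
  · have h := h2 (m + 1 + s) (by omega) (by omega)
    rw [show (3 * (2 * m + 1) - 1) / 2 - (m + 1 + s) = 2 * m - s by omega] at h
    rw [← map_add, hφ h]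

theorem stmt_0 (n : ℕ) (hn : 0 < n) (hodd : Odd n) (a : ℕ → Polynomial ℚ)
    (h1 : ∀ k, k ≤ (n - 1) / 2 →
      Polynomial.cyclotomic n ℚ ∣ (a k + a ((n - 1) / 2 - k)))
    (h2 : ∀ k, (n + 1) / 2 ≤ k → k ≤ n - 1 →
      Polynomial.cyclotomic n ℚ ∣ (a k + a ((3 * n - 1) / 2 - k))) :
    Polynomial.cyclotomic n ℚ ∣ ∑ i ∈ range n, ∑ j ∈ range (n - i), a i * a j :=
  stmt_0_general n hodd a h1 h2
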